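/- In the change-point factor model with white-noise orthogonality, let B_i ∈ ℝ^{p×(p−k_i)} have orthonormal columns with B_iᵀ A_i = 0, and define G(γ) = ‖B1ᵀ M_1(γ) B1‖₂ + ‖B2ᵀ M_2(γ) B2‖₂ with M_i(γ) = Σ_{h=1}^{h0} Σ_{y,i}(h,γ) Σ_{y,i}(h,γ)ᵀ. Let ε satisfy (h0+1)/n < ε < 1−γ0 ≤ 1 with εn an integer, and assume: (i) ‖A2 v‖₂ ≥ a2 p^{(1−δ2)/2} ‖v‖₂ for all v ∈ ℝ^{k2}, with a2 > 0 and δ2 ∈ [0,1]; (ii) ‖B1ᵀ A2‖₂² ≥ a2² d² τ p^{1−δ2} for some d > 0 and τ > 0; (iii) there exists h2* ∈ {1,…,h0} such that the matrix Γ = (1/(εn−h2*)) · Σ_{t=r0+1}^{r0+εn−h2*} E[x_{t,2} x_{t+h2*,2}ᵀ] satisfies ‖Γ v‖₂ ≥ u0 ‖v‖₂ for all v ∈ ℝ^{k2}, with u0 > 0. Then G(γ0+ε) ≥ a2⁴ d² τ u0² ( ε² p^{2−2δ2} − 2 h2* p^{2−2δ2} / n ). -/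

import Mathlib

open Matrix MeasureTheory Finset

/-- Entrywise expectation of the outer product `E[u vᵀ]`. -/
noncomputable def outerE {Ω : Type} [MeasurableSpace Ω] (μ : Measure Ω) {a b : ℕ}
    (u : Ω → Fin a → ℝ) (v : Ω → Fin b → ℝ) : Matrix (Fin a) (Fin b) ℝ :=
  Matrix.of fun i j => ∫ ω, u ω i * v ω j ∂μ

/-- `Σ_{y,1}(h,γ) = (1/n)·Σ_{t=1}^{r−h} E[y_t y_{t+h}ᵀ]` where `r = ⌊γn⌋`. -/
noncomputable def SigY1 {Ω : Type} [MeasurableSpace Ω] (μ : Measure Ω) {p : ℕ}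
    (y : ℕ → Ω → Fin p → ℝ) (n h r : ℕ) : Matrix (Fin p) (Fin p) ℝ :=
  (n : ℝ)⁻¹ • ∑ t ∈ Finset.Icc 1 (r - h), outerE μ (y t) (y (t + h))

/-- `Σ_{y,2}(h,γ) = (1/n)·Σ_{t=r+1}^{n−h} E[y_t y_{t+h}ᵀ]` where `r = ⌊γn⌋`. -/
noncomputable def SigY2 {Ω : Type} [MeasurableSpace Ω] (μ : Measure Ω) {p : ℕ}
    (y : ℕ → Ω → Fin p → ℝ) (n h r : ℕ) : Matrix (Fin p) (Fin p) ℝ :=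
  (n : ℝ)⁻¹ • ∑ t ∈ Finset.Icc (r + 1) (n - h), outerE μ (y t) (y (t + h))

/-- Spectral norm (largest singular value) of a real matrix. -/
noncomputable def spec {m n : ℕ} (A : Matrix (Fin m) (Fin n) ℝ) : ℝ :=
  ‖LinearMap.toContinuousLinearMap (Matrix.toEuclideanLin A)‖

/-- Euclidean norm of a vector. -/
noncomputable def vnorm {n : ℕ} (v : Fin n → ℝ) : ℝ :=
  Real.sqrt (∑ i, v i ^ 2)

/-!
Projecting on the left by `B1ᵀ` annihilates the pre-change loadings `A1`, and white-noise
orthogonality annihilates every noise cross-moment at a nonzero lag. Hence at `γ = γ0 + ε`,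
i.e. `r = r0 + εn`, only the post-change stretch of the lag-`h2*` autocovariance survives:
`B1ᵀ Σ_{y,1}(h2*) = ((εn - h2*)/n) (B1ᵀA2) Γ A2ᵀ`. As `A2` and `Γ` are bounded below, its
spectral norm is at least `((εn - h2*)/n) a2 p^{(1-δ2)/2} u0 ‖B1ᵀA2‖₂`. Finally
`B1ᵀ M_1 B1 = ∑_h (B1ᵀ Σ_{y,1}(h)) (B1ᵀ Σ_{y,1}(h))ᵀ` is a sum of positive semidefinite terms,
so its norm dominates `‖B1ᵀ Σ_{y,1}(h2*)‖₂²`, while the second summand of `G` is nonnegative.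
-/

open scoped Matrix.Norms.L2Operator

section SpectralNorm

variable {a b c k : ℕ}

lemma spec_eq_norm (A : Matrix (Fin a) (Fin b) ℝ) : spec A = ‖A‖ := rfl

lemma vnorm_eq_norm_toLp (v : Fin a → ℝ) : vnorm v = ‖WithLp.toLp 2 v‖ := by
  simp [vnorm, EuclideanSpace.norm_eq]

lemma vnorm_sq (v : Fin a → ℝ) : vnorm v ^ 2 = v ⬝ᵥ v := by
  rw [vnorm, Real.sq_sqrt (by positivity)]
  simp [dotProduct, sq]

lemma dotProduct_le_vnorm_mul_vnorm (v w : Fin a → ℝ) : v ⬝ᵥ w ≤ vnorm v * vnorm w := by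
  simpa [vnorm_eq_norm_toLp, EuclideanSpace.inner_toLp_toLp, dotProduct_comm]
    using real_inner_le_norm (WithLp.toLp 2 v) (WithLp.toLp 2 w)

lemma vnorm_mulVec_le (A : Matrix (Fin a) (Fin b) ℝ) (v : Fin b → ℝ) :
    vnorm (A *ᵥ v) ≤ ‖A‖ * vnorm v := by
  simpa [vnorm_eq_norm_toLp] using A.l2_opNorm_mulVec (WithLp.toLp 2 v)

lemma norm_le_of_vnorm_mulVec_le (A : Matrix (Fin a) (Fin b) ℝ) {C : ℝ} (hC : 0 ≤ C)
    (h : ∀ v, vnorm (A *ᵥ v) ≤ C * vnorm v) : ‖A‖ ≤ C :=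
  ContinuousLinearMap.opNorm_le_bound _ hC fun v => by
    simpa [vnorm_eq_norm_toLp, Matrix.toLpLin_apply] using h v.ofLp

lemma l2_opNorm_transpose (A : Matrix (Fin a) (Fin b) ℝ) : ‖Aᵀ‖ = ‖A‖ := by
  simpa using Matrix.l2_opNorm_conjTranspose A

lemma mul_norm_le_norm_mul_left (A : Matrix (Fin a) (Fin b) ℝ) (B : Matrix (Fin b) (Fin c) ℝ)
    {C : ℝ} (hC : 0 < C) (hA : ∀ v, C * vnorm v ≤ vnorm (A *ᵥ v)) :
    C * ‖B‖ ≤ ‖A * B‖ := by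
  rw [← le_div_iff₀' hC]
  refine norm_le_of_vnorm_mulVec_le B (by positivity) fun v => ?_
  rw [div_mul_eq_mul_div, le_div_iff₀' hC]
  calc C * vnorm (B *ᵥ v) ≤ vnorm (A *ᵥ B *ᵥ v) := hA _
    _ = vnorm ((A * B) *ᵥ v) := by rw [Matrix.mulVec_mulVec]
    _ ≤ ‖A * B‖ * vnorm v := vnorm_mulVec_le _ _

lemma mul_norm_le_norm_mul_right (N : Matrix (Fin a) (Fin b) ℝ) (G : Matrix (Fin b) (Fin b) ℝ)
    {C : ℝ} (hC : 0 < C) (hG : ∀ v, C * vnorm v ≤ vnorm (G *ᵥ v)) :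
    C * ‖N‖ ≤ ‖N * G‖ := by
  have hunit : IsUnit G.det := by
    rw [← Matrix.isUnit_iff_isUnit_det, ← Matrix.mulVec_injective_iff_isUnit]
    intro v w hvw
    have h := hG (v - w)
    rw [Matrix.mulVec_sub, hvw, sub_self, vnorm_eq_norm_toLp, vnorm_eq_norm_toLp,
      WithLp.toLp_zero, norm_zero] at h
    have h0 : ‖WithLp.toLp 2 (v - w)‖ = 0 :=
      le_antisymm (nonpos_of_mul_nonpos_right h hC) (norm_nonneg _)
    simpa [sub_eq_zero] using h0
  have hinv : ‖G⁻¹‖ ≤ C⁻¹ := by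
    refine norm_le_of_vnorm_mulVec_le _ (by positivity) fun w => ?_
    rw [inv_mul_eq_div, le_div_iff₀' hC]
    simpa [Matrix.mulVec_mulVec, Matrix.mul_nonsing_inv _ hunit] using hG (G⁻¹ *ᵥ w)
  calc C * ‖N‖ = C * ‖N * G * G⁻¹‖ := by rw [Matrix.mul_nonsing_inv_cancel_right _ _ hunit]
    _ ≤ C * (‖N * G‖ * C⁻¹) := by
      gcongr
      exact (Matrix.l2_opNorm_mul _ _).trans (by gcongr)
    _ = ‖N * G‖ := by field_simp

lemma sq_norm_le_norm_sum_mul_transpose {ι : Type*} {s : Finset ι}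
    (F : ι → Matrix (Fin a) (Fin b) ℝ) {j : ι} (hj : j ∈ s) :
    ‖F j‖ ^ 2 ≤ ‖∑ i ∈ s, F i * (F i)ᵀ‖ := by
  set S := ∑ i ∈ s, F i * (F i)ᵀ
  have hquad : ∀ A : Matrix (Fin a) (Fin b) ℝ, ∀ v, vnorm (Aᵀ *ᵥ v) ^ 2 = v ⬝ᵥ (A * Aᵀ) *ᵥ v :=
    fun A v => by
      rw [vnorm_sq, ← Matrix.mulVec_mulVec, Matrix.dotProduct_mulVec, Matrix.vecMul_transpose,
        dotProduct_comm]
  have hS : ∀ v, vnorm ((F j)ᵀ *ᵥ v) ^ 2 ≤ (‖S‖.sqrt * vnorm v) ^ 2 := fun v => calc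
    vnorm ((F j)ᵀ *ᵥ v) ^ 2 ≤ ∑ i ∈ s, v ⬝ᵥ (F i * (F i)ᵀ) *ᵥ v := by
      rw [hquad]
      exact Finset.single_le_sum (f := fun i => v ⬝ᵥ (F i * (F i)ᵀ) *ᵥ v)
        (fun i _ => by rw [← hquad]; positivity) hj
    _ = v ⬝ᵥ S *ᵥ v := by simp only [S, Matrix.sum_mulVec, dotProduct_sum]
    _ ≤ vnorm v * (‖S‖ * vnorm v) :=
      (dotProduct_le_vnorm_mul_vnorm _ _).trans
        (mul_le_mul_of_nonneg_left (vnorm_mulVec_le S v) (Real.sqrt_nonneg _))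
    _ = (‖S‖.sqrt * vnorm v) ^ 2 := by rw [mul_pow, Real.sq_sqrt (norm_nonneg _)]; ring
  have hFj : ‖(F j)ᵀ‖ ≤ ‖S‖.sqrt := norm_le_of_vnorm_mulVec_le _ (Real.sqrt_nonneg _)
    fun v => pow_le_pow_iff_left₀ (Real.sqrt_nonneg _)
      (mul_nonneg (Real.sqrt_nonneg _) (Real.sqrt_nonneg _)) two_ne_zero |>.1 (hS v)
  rw [l2_opNorm_transpose] at hFj
  calc ‖F j‖ ^ 2 ≤ ‖S‖.sqrt ^ 2 := by gcongr
    _ = ‖S‖ := Real.sq_sqrt (norm_nonneg _)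

lemma mul_mul_norm_le_norm_mul_mul_transpose (K : Matrix (Fin a) (Fin k) ℝ)
    (G : Matrix (Fin k) (Fin k) ℝ) (A : Matrix (Fin b) (Fin k) ℝ) {cA cG : ℝ} (hcA : 0 < cA)
    (hcG : 0 < cG) (hA : ∀ v, cA * vnorm v ≤ vnorm (A *ᵥ v))
    (hG : ∀ v, cG * vnorm v ≤ vnorm (G *ᵥ v)) :
    cA * cG * ‖K‖ ≤ ‖K * G * Aᵀ‖ := calc
  cA * cG * ‖K‖ ≤ cA * ‖(K * G)ᵀ‖ := by
    rw [mul_assoc, l2_opNorm_transpose]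
    gcongr
    exact mul_norm_le_norm_mul_right K G hcG hG
  _ ≤ ‖A * (K * G)ᵀ‖ := mul_norm_le_norm_mul_left A _ hcA hA
  _ = ‖K * G * Aᵀ‖ := by
    rw [← l2_opNorm_transpose, Matrix.transpose_mul, Matrix.transpose_transpose]

lemma sq_norm_transpose_mul_le (B : Matrix (Fin a) (Fin b) ℝ) {ι : Type*} {s : Finset ι}
    (S : ι → Matrix (Fin a) (Fin c) ℝ) {j : ι} (hj : j ∈ s) :
    ‖Bᵀ * S j‖ ^ 2 ≤ ‖Bᵀ * (∑ i ∈ s, S i * (S i)ᵀ) * B‖ := by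
  have hsum : Bᵀ * (∑ i ∈ s, S i * (S i)ᵀ) * B = ∑ i ∈ s, (Bᵀ * S i) * (Bᵀ * S i)ᵀ := by
    simp only [Matrix.mul_sum, Matrix.sum_mul, Matrix.transpose_mul, Matrix.transpose_transpose,
      Matrix.mul_assoc]
  rw [hsum]
  exact sq_norm_le_norm_sum_mul_transpose (fun i => Bᵀ * S i) hj

end SpectralNorm

section SecondMoments

variable {Ω : Type} [MeasurableSpace Ω] {μ : Measure Ω} {a b c : ℕ}

lemma integrable_mul_of_memLp_two {f g : Ω → ℝ} (hf : MemLp f 2 μ) (hg : MemLp g 2 μ) :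
    Integrable (fun ω => f ω * g ω) μ :=
  hf.integrable_mul hg

lemma memLp_mulVec (A : Matrix (Fin c) (Fin a) ℝ) {u : Ω → Fin a → ℝ}
    (hu : ∀ i, MemLp (fun ω => u ω i) 2 μ) (i : Fin c) :
    MemLp (fun ω => (A *ᵥ u ω) i) 2 μ := by
  simpa [Matrix.mulVec, dotProduct, Finset.sum_fn] using
    memLp_finsetSum' Finset.univ fun k _ => (hu k).const_mul (A i k)

lemma outerE_transpose (u : Ω → Fin a → ℝ) (v : Ω → Fin b → ℝ) :
    (outerE μ u v)ᵀ = outerE μ v u := by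
  ext i j
  simp [outerE, mul_comm]

lemma outerE_add_left {u v : Ω → Fin a → ℝ} {w : Ω → Fin b → ℝ}
    (hu : ∀ i, MemLp (fun ω => u ω i) 2 μ) (hv : ∀ i, MemLp (fun ω => v ω i) 2 μ)
    (hw : ∀ j, MemLp (fun ω => w ω j) 2 μ) :
    outerE μ (fun ω => u ω + v ω) w = outerE μ u w + outerE μ v w := by
  ext i j
  simp only [outerE, Matrix.of_apply, Matrix.add_apply, Pi.add_apply, add_mul]
  exact integral_add (integrable_mul_of_memLp_two (hu i) (hw j))
    (integrable_mul_of_memLp_two (hv i) (hw j))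

lemma outerE_mulVec_left (A : Matrix (Fin c) (Fin a) ℝ) {u : Ω → Fin a → ℝ}
    {v : Ω → Fin b → ℝ} (hu : ∀ i, MemLp (fun ω => u ω i) 2 μ)
    (hv : ∀ j, MemLp (fun ω => v ω j) 2 μ) :
    outerE μ (fun ω => A *ᵥ u ω) v = A * outerE μ u v := by
  ext i j
  simp only [outerE, Matrix.mul_apply, Matrix.of_apply, Matrix.mulVec, dotProduct,
    Finset.sum_mul, mul_assoc]
  rw [integral_finsetSum _ fun k _ => (integrable_mul_of_memLp_two (hu k) (hv j)).const_mul _]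
  simp only [integral_const_mul]

lemma outerE_mulVec_add_left (A : Matrix (Fin c) (Fin a) ℝ) {x : Ω → Fin a → ℝ}
    {e : Ω → Fin c → ℝ} {w : Ω → Fin b → ℝ} (hx : ∀ i, MemLp (fun ω => x ω i) 2 μ)
    (he : ∀ i, MemLp (fun ω => e ω i) 2 μ) (hw : ∀ j, MemLp (fun ω => w ω j) 2 μ)
    (hew : outerE μ e w = 0) :
    outerE μ (fun ω => A *ᵥ x ω + e ω) w = A * outerE μ x w := by
  rw [outerE_add_left (memLp_mulVec A hx) he hw, outerE_mulVec_left A hx hw, hew, add_zero]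

lemma outerE_mulVec_add_right (A : Matrix (Fin c) (Fin a) ℝ) {x : Ω → Fin a → ℝ}
    {e : Ω → Fin c → ℝ} {w : Ω → Fin b → ℝ} (hx : ∀ i, MemLp (fun ω => x ω i) 2 μ)
    (he : ∀ i, MemLp (fun ω => e ω i) 2 μ) (hw : ∀ j, MemLp (fun ω => w ω j) 2 μ)
    (hwe : outerE μ w e = 0) :
    outerE μ w (fun ω => A *ᵥ x ω + e ω) = outerE μ w x * Aᵀ := by
  rw [← outerE_transpose, outerE_mulVec_add_left A hx he hw (by rw [← outerE_transpose, hwe,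
    Matrix.transpose_zero]), Matrix.transpose_mul, outerE_transpose]

end SecondMoments

structure IsChangePointModel {Ω : Type} [MeasurableSpace Ω] (μ : Measure Ω) {p k1 k2 : ℕ}
    (n r0 : ℕ) (A1 : Matrix (Fin p) (Fin k1) ℝ) (A2 : Matrix (Fin p) (Fin k2) ℝ)
    (x1 : ℕ → Ω → Fin k1 → ℝ) (x2 : ℕ → Ω → Fin k2 → ℝ) (e y : ℕ → Ω → Fin p → ℝ) : Prop where
  memLp_x1 : ∀ t j, MemLp (fun ω => x1 t ω j) 2 μ
  memLp_x2 : ∀ t j, MemLp (fun ω => x2 t ω j) 2 μ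
  memLp_e : ∀ t i, MemLp (fun ω => e t ω i) 2 μ
  obs_pre : ∀ t, 1 ≤ t → t ≤ r0 → y t = fun ω => A1 *ᵥ x1 t ω + e t ω
  obs_post : ∀ t, r0 < t → t ≤ n → y t = fun ω => A2 *ᵥ x2 t ω + e t ω
  noise_white : ∀ s t, s ≠ t → outerE μ (e s) (e t) = 0
  factor1_noise : ∀ t s, outerE μ (x1 t) (e s) = 0
  factor2_noise : ∀ t s, outerE μ (x2 t) (e s) = 0

namespace IsChangePointModel

variable {Ω : Type} [MeasurableSpace Ω] {μ : Measure Ω} {p k1 k2 n r0 : ℕ}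
  {A1 : Matrix (Fin p) (Fin k1) ℝ} {A2 : Matrix (Fin p) (Fin k2) ℝ}
  {x1 : ℕ → Ω → Fin k1 → ℝ} {x2 : ℕ → Ω → Fin k2 → ℝ} {e y : ℕ → Ω → Fin p → ℝ}

lemma memLp_obs (hM : IsChangePointModel μ n r0 A1 A2 x1 x2 e y) {t : ℕ} (ht : 1 ≤ t)
    (htn : t ≤ n) (i : Fin p) : MemLp (fun ω => y t ω i) 2 μ := by
  rcases le_or_gt t r0 with hpre | hpost
  · rw [hM.obs_pre t ht hpre]
    exact (memLp_mulVec A1 (hM.memLp_x1 t) i).add (hM.memLp_e t i)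
  · rw [hM.obs_post t hpost htn]
    exact (memLp_mulVec A2 (hM.memLp_x2 t) i).add (hM.memLp_e t i)

lemma outerE_noise_obs_eq_zero (hM : IsChangePointModel μ n r0 A1 A2 x1 x2 e y) {t s : ℕ}
    (hs : 1 ≤ s) (hsn : s ≤ n) (hts : t ≠ s) : outerE μ (e t) (y s) = 0 := by
  rcases le_or_gt s r0 with hpre | hpost
  · rw [hM.obs_pre s hs hpre, outerE_mulVec_add_right A1 (hM.memLp_x1 s) (hM.memLp_e s)
      (hM.memLp_e t) (hM.noise_white t s hts), ← outerE_transpose, hM.factor1_noise,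
      Matrix.transpose_zero, Matrix.zero_mul]
  · rw [hM.obs_post s hpost hsn, outerE_mulVec_add_right A2 (hM.memLp_x2 s) (hM.memLp_e s)
      (hM.memLp_e t) (hM.noise_white t s hts), ← outerE_transpose, hM.factor2_noise,
      Matrix.transpose_zero, Matrix.zero_mul]

lemma mul_outerE_obs_pre_eq_zero {q : ℕ} (hM : IsChangePointModel μ n r0 A1 A2 x1 x2 e y)
    {B : Matrix (Fin q) (Fin p) ℝ} (hBA : B * A1 = 0) {t s : ℕ} (ht : 1 ≤ t) (htr : t ≤ r0)
    (hs : 1 ≤ s) (hsn : s ≤ n) (hts : t ≠ s) : B * outerE μ (y t) (y s) = 0 := by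
  rw [hM.obs_pre t ht htr, outerE_mulVec_add_left A1 (hM.memLp_x1 t) (hM.memLp_e t)
    (hM.memLp_obs hs hsn) (hM.outerE_noise_obs_eq_zero hs hsn hts), ← Matrix.mul_assoc, hBA,
    Matrix.zero_mul]

lemma outerE_obs_post (hM : IsChangePointModel μ n r0 A1 A2 x1 x2 e y) {t s : ℕ}
    (ht : r0 < t) (hts : t < s) (hsn : s ≤ n) :
    outerE μ (y t) (y s) = A2 * outerE μ (x2 t) (x2 s) * A2ᵀ := by
  rw [hM.obs_post t ht (by omega), outerE_mulVec_add_left A2 (hM.memLp_x2 t) (hM.memLp_e t)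
    (hM.memLp_obs (by omega) hsn) (hM.outerE_noise_obs_eq_zero (by omega) hsn hts.ne),
    hM.obs_post s (by omega) hsn, outerE_mulVec_add_right A2 (hM.memLp_x2 s) (hM.memLp_e s)
    (hM.memLp_x2 t) (hM.factor2_noise t s), Matrix.mul_assoc]

lemma mul_SigY1_eq {q : ℕ} (hM : IsChangePointModel μ n r0 A1 A2 x1 x2 e y)
    {B : Matrix (Fin q) (Fin p) ℝ} (hBA : B * A1 = 0) {h m : ℕ} (hh : 1 ≤ h) (hhm : h ≤ m)
    (hmn : r0 + m ≤ n) :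
    B * SigY1 μ y n h (r0 + m) = (n : ℝ)⁻¹ •
      (B * A2 * (∑ t ∈ Icc (r0 + 1) (r0 + (m - h)), outerE μ (x2 t) (x2 (t + h))) * A2ᵀ) := by
  rw [SigY1, Matrix.mul_smul, Matrix.mul_sum, Matrix.mul_sum, Matrix.sum_mul,
    show r0 + m - h = r0 + (m - h) by omega, Icc_add_one_left_eq_Ioc r0,
    show Icc 1 (r0 + (m - h)) = Ioc 0 (r0 + (m - h)) from Icc_add_one_left_eq_Ioc 0 _,
    ← sum_Ioc_consecutive _ (Nat.zero_le r0) (Nat.le_add_right _ _),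
    sum_eq_zero fun t ht => ?pre, zero_add]
  case pre =>
    obtain ⟨ht1, htr⟩ := mem_Ioc.1 ht
    exact hM.mul_outerE_obs_pre_eq_zero hBA ht1 htr (by omega) (by omega) (by omega)
  congr 1
  refine sum_congr rfl fun t ht => ?_
  obtain ⟨ht1, htr⟩ := mem_Ioc.1 ht
  rw [hM.outerE_obs_post ht1 (by omega) (by omega), Matrix.mul_assoc, Matrix.mul_assoc,
    Matrix.mul_assoc]

lemma mul_norm_le_norm_mul_SigY1 {q : ℕ} (hM : IsChangePointModel μ n r0 A1 A2 x1 x2 e y)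
    {B : Matrix (Fin q) (Fin p) ℝ} (hBA : B * A1 = 0) {h m : ℕ} (hh : 1 ≤ h) (hhm : h < m)
    (hmn : r0 + m ≤ n) {cA u0 : ℝ} (hcA : 0 < cA) (hu0 : 0 < u0)
    (hA2 : ∀ v, cA * vnorm v ≤ vnorm (A2 *ᵥ v))
    (hΓ : ∀ v, u0 * vnorm v ≤ vnorm ((((m : ℝ) - h)⁻¹ •
      ∑ t ∈ Icc (r0 + 1) (r0 + (m - h)), outerE μ (x2 t) (x2 (t + h))) *ᵥ v)) :
    ((m : ℝ) - h) / n * (cA * u0 * ‖B * A2‖) ≤ ‖B * SigY1 μ y n h (r0 + m)‖ := by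
  set Γ := ((m : ℝ) - h)⁻¹ • ∑ t ∈ Icc (r0 + 1) (r0 + (m - h)), outerE μ (x2 t) (x2 (t + h))
    with hΓdef
  have hc : (0 : ℝ) < m - h := by rw [sub_pos]; exact_mod_cast hhm
  have hsig : B * SigY1 μ y n h (r0 + m) = (((m : ℝ) - h) / n) • (B * A2 * Γ * A2ᵀ) := by
    rw [hM.mul_SigY1_eq hBA hh hhm.le hmn, hΓdef, Matrix.mul_smul, Matrix.smul_mul, smul_smul]
    congr 1
    field_simp
  rw [hsig, norm_smul, Real.norm_of_nonneg (div_nonneg hc.le (Nat.cast_nonneg n))]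
  gcongr
  exact mul_mul_norm_le_norm_mul_mul_transpose _ _ _ hcA hu0 hA2 hΓ

end IsChangePointModel

lemma changepoint_index_bounds {n r0 m h0 : ℕ} {ε : ℝ} (hn : 0 < n) (hm : ε * n = m)
    (hεlb : ((h0 : ℝ) + 1) / n < ε) (hεub : ε < 1 - (r0 : ℝ) / n) : h0 < m ∧ r0 + m ≤ n := by
  have hn' : (0 : ℝ) < n := by exact_mod_cast hn
  have hlb := (div_lt_iff₀ hn').1 hεlb
  have hub := mul_lt_mul_of_pos_right hεub hn'
  rw [sub_mul, one_mul, div_mul_cancel₀ _ hn'.ne', hm] at hub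
  rw [hm] at hlb
  exact ⟨by exact_mod_cast (show (h0 : ℝ) < m by linarith),
    by exact_mod_cast (show ((r0 + m : ℕ) : ℝ) ≤ n by push_cast; linarith)⟩

lemma floor_add_div_mul_eq {n r0 m : ℕ} {ε : ℝ} (hn : 0 < n) (hm : ε * n = m) :
    ⌊((r0 : ℝ) / n + ε) * n⌋₊ = r0 + m := by
  have hn' : (n : ℝ) ≠ 0 := by positivity
  rw [add_mul, div_mul_cancel₀ _ hn', hm, ← Nat.cast_add, Nat.floor_natCast]

lemma factor_lower_bound_le_sq {a2 d τ u0 p δ ε h n κ : ℝ} (hτ : 0 ≤ τ) (hp : 0 ≤ p)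
    (hh : 0 ≤ h) (hn : 0 ≤ n) (hε : ε ≤ 1) (hκ : a2 ^ 2 * d ^ 2 * τ * p ^ (1 - δ) ≤ κ ^ 2) :
    a2 ^ 4 * d ^ 2 * τ * u0 ^ 2 * (ε ^ 2 * p ^ (2 - 2 * δ) - 2 * h * p ^ (2 - 2 * δ) / n) ≤
      ((ε - h / n) * (a2 * p ^ ((1 - δ) / 2) * u0 * κ)) ^ 2 := by
  have hP : p ^ (2 - 2 * δ) = (p ^ (1 - δ)) ^ 2 := by rw [← Real.rpow_mul_natCast hp]; ring_nf
  have hc : (a2 * p ^ ((1 - δ) / 2)) ^ 2 = a2 ^ 2 * p ^ (1 - δ) := by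
    rw [mul_pow, ← Real.rpow_mul_natCast hp]; ring_nf
  have hx : 0 ≤ h / n := by positivity
  have hsq : ε ^ 2 - 2 * (h / n) ≤ (ε - h / n) ^ 2 := by
    nlinarith [mul_nonneg (sub_nonneg.2 hε) hx, sq_nonneg (h / n)]
  calc a2 ^ 4 * d ^ 2 * τ * u0 ^ 2 * (ε ^ 2 * p ^ (2 - 2 * δ) - 2 * h * p ^ (2 - 2 * δ) / n)
      = a2 ^ 2 * p ^ (1 - δ) * u0 ^ 2 * (a2 ^ 2 * d ^ 2 * τ * p ^ (1 - δ)) *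
          (ε ^ 2 - 2 * (h / n)) := by rw [hP]; ring
    _ ≤ a2 ^ 2 * p ^ (1 - δ) * u0 ^ 2 * (a2 ^ 2 * d ^ 2 * τ * p ^ (1 - δ)) *
          (ε - h / n) ^ 2 := by gcongr
    _ ≤ a2 ^ 2 * p ^ (1 - δ) * u0 ^ 2 * κ ^ 2 * (ε - h / n) ^ 2 := by gcongr
    _ = ((ε - h / n) * (a2 * p ^ ((1 - δ) / 2) * u0 * κ)) ^ 2 := by
      rw [mul_pow, mul_pow, mul_pow, hc]; ring

theorem stmt18_general {Ω : Type} [MeasurableSpace Ω] (μ : Measure Ω)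
    {p k1 k2 n r0 : ℕ} (hp : 0 < p) (hn : 0 < n)
    (A1 : Matrix (Fin p) (Fin k1) ℝ) (A2 : Matrix (Fin p) (Fin k2) ℝ)
    (x1 : ℕ → Ω → Fin k1 → ℝ) (x2 : ℕ → Ω → Fin k2 → ℝ)
    (e : ℕ → Ω → Fin p → ℝ) (y : ℕ → Ω → Fin p → ℝ)
    (hL2x1 : ∀ t j, MemLp (fun ω => x1 t ω j) 2 μ)
    (hL2x2 : ∀ t j, MemLp (fun ω => x2 t ω j) 2 μ)
    (hL2e : ∀ t i, MemLp (fun ω => e t ω i) 2 μ)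
    (hmodel1 : ∀ t, 1 ≤ t → t ≤ r0 → ∀ ω, y t ω = A1.mulVec (x1 t ω) + e t ω)
    (hmodel2 : ∀ t, r0 < t → t ≤ n → ∀ ω, y t ω = A2.mulVec (x2 t ω) + e t ω)
    (hee : ∀ s t, s ≠ t → outerE μ (e s) (e t) = 0)
    (hx1e : ∀ t s, outerE μ (x1 t) (e s) = 0)
    (hx2e : ∀ t s, outerE μ (x2 t) (e s) = 0)
    (B1 : Matrix (Fin p) (Fin (p - k1)) ℝ) (B2 : Matrix (Fin p) (Fin (p - k2)) ℝ)
    (hB1A1 : B1ᵀ * A1 = 0)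
    (h0 : ℕ)
    (ε : ℝ) (m : ℕ) (hm : ε * n = m)
    (hεlb : ((h0 : ℝ) + 1) / n < ε) (hεub : ε < 1 - (r0 : ℝ) / n)
    (a2 δ2 : ℝ) (ha2 : 0 < a2)
    (hA2min : ∀ v : Fin k2 → ℝ,
      a2 * (p : ℝ) ^ ((1 - δ2) / 2) * vnorm v ≤ vnorm (A2.mulVec v))
    (d τ : ℝ) (hτ : 0 < τ)
    (hBA : a2 ^ 2 * d ^ 2 * τ * (p : ℝ) ^ (1 - δ2) ≤ spec (B1ᵀ * A2) ^ 2)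
    (h2s : ℕ) (hh2s : h2s ∈ Finset.Icc 1 h0) (u0 : ℝ) (hu0 : 0 < u0)
    (hΓmin : ∀ v : Fin k2 → ℝ,
      u0 * vnorm v ≤ vnorm
        ((((m : ℝ) - h2s)⁻¹ •
          ∑ t ∈ Finset.Icc (r0 + 1) (r0 + (m - h2s)),
            outerE μ (x2 t) (x2 (t + h2s))).mulVec v)) :
    a2 ^ 4 * d ^ 2 * τ * u0 ^ 2 *
        (ε ^ 2 * (p : ℝ) ^ (2 - 2 * δ2) - 2 * h2s * (p : ℝ) ^ (2 - 2 * δ2) / n) ≤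
      spec (B1ᵀ * (∑ h ∈ Finset.Icc 1 h0,
          SigY1 μ y n h ⌊((r0 : ℝ) / n + ε) * n⌋₊ *
            (SigY1 μ y n h ⌊((r0 : ℝ) / n + ε) * n⌋₊)ᵀ) * B1) +
      spec (B2ᵀ * (∑ h ∈ Finset.Icc 1 h0,
          SigY2 μ y n h ⌊((r0 : ℝ) / n + ε) * n⌋₊ *
            (SigY2 μ y n h ⌊((r0 : ℝ) / n + ε) * n⌋₊)ᵀ) * B2) := by
  have hM : IsChangePointModel μ n r0 A1 A2 x1 x2 e y := ⟨hL2x1, hL2x2, hL2e,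
    fun t h1 h2 => funext (hmodel1 t h1 h2), fun t h1 h2 => funext (hmodel2 t h1 h2),
    hee, hx1e, hx2e⟩
  obtain ⟨hh2s1, hh2s0⟩ := mem_Icc.1 hh2s
  obtain ⟨hh0m, hmn⟩ := changepoint_index_bounds hn hm hεlb hεub
  have hε1 : ε ≤ 1 := hεub.le.trans (by linarith [show 0 ≤ (r0 : ℝ) / n by positivity])
  have hq : ((m : ℝ) - h2s) / n = ε - h2s / n := by
    rw [sub_div, ← hm, mul_div_cancel_right₀ _ (by positivity)]
  have hmh : (0 : ℝ) ≤ m - h2s := sub_nonneg.2 (by exact_mod_cast hh2s0.trans hh0m.le)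
  have hsignal := hM.mul_norm_le_norm_mul_SigY1 hB1A1 hh2s1 (by omega) hmn (by positivity) hu0
    hA2min hΓmin
  rw [hq] at hsignal
  rw [floor_add_div_mul_eq hn hm]
  simp only [spec_eq_norm] at hBA ⊢
  calc _ ≤ ((ε - h2s / n) * (a2 * (p : ℝ) ^ ((1 - δ2) / 2) * u0 * ‖B1ᵀ * A2‖)) ^ 2 :=
        factor_lower_bound_le_sq hτ.le (Nat.cast_nonneg _) (Nat.cast_nonneg _)
          (Nat.cast_nonneg _) hε1 hBA
    _ ≤ ‖B1ᵀ * SigY1 μ y n h2s (r0 + m)‖ ^ 2 :=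
      pow_le_pow_left₀ (by rw [← hq]; positivity) hsignal 2
    _ ≤ _ := sq_norm_transpose_mul_le B1 (fun h => SigY1 μ y n h (r0 + m)) hh2s
    _ ≤ _ := le_add_of_nonneg_right (norm_nonneg _)

/-- In the change-point factor model with white-noise orthogonality,
with `B_i` orthonormal, `B_iᵀA_i = 0` and
`G(γ) = ‖B1ᵀ M_1(γ) B1‖₂ + ‖B2ᵀ M_2(γ) B2‖₂`, for `(h0+1)/n < ε < 1−γ0 ≤ 1` with
`εn ∈ ℕ`, under (i) a min-singular-value lower bound for `A2`, (ii)
`‖B1ᵀA2‖₂² ≥ a2²d²τp^{1−δ2}`, and (iii) a min-singular-value lower bound `u0` for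
`Γ` at some lag `h2* ∈ {1,…,h0}`, one has
`G(γ0+ε) ≥ a2⁴ d² τ u0² (ε² p^{2−2δ2} − 2 h2* p^{2−2δ2}/n)`. -/
theorem stmt18 {Ω : Type} [MeasurableSpace Ω] (μ : Measure Ω) [IsProbabilityMeasure μ]
    {p k1 k2 n r0 : ℕ} (hp : 0 < p) (hn : 0 < n) (hr0 : 1 ≤ r0) (hr0n : r0 ≤ n)
    (A1 : Matrix (Fin p) (Fin k1) ℝ) (A2 : Matrix (Fin p) (Fin k2) ℝ)
    (x1 : ℕ → Ω → Fin k1 → ℝ) (x2 : ℕ → Ω → Fin k2 → ℝ)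
    (e : ℕ → Ω → Fin p → ℝ) (y : ℕ → Ω → Fin p → ℝ)
    (hL2x1 : ∀ t j, MemLp (fun ω => x1 t ω j) 2 μ)
    (hL2x2 : ∀ t j, MemLp (fun ω => x2 t ω j) 2 μ)
    (hL2e : ∀ t i, MemLp (fun ω => e t ω i) 2 μ)
    (hmodel1 : ∀ t, 1 ≤ t → t ≤ r0 → ∀ ω, y t ω = A1.mulVec (x1 t ω) + e t ω)
    (hmodel2 : ∀ t, r0 < t → t ≤ n → ∀ ω, y t ω = A2.mulVec (x2 t ω) + e t ω)
    (hee : ∀ s t, s ≠ t → outerE μ (e s) (e t) = 0)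
    (hx1e : ∀ t s, outerE μ (x1 t) (e s) = 0)
    (hx2e : ∀ t s, outerE μ (x2 t) (e s) = 0)
    (B1 : Matrix (Fin p) (Fin (p - k1)) ℝ) (B2 : Matrix (Fin p) (Fin (p - k2)) ℝ)
    (hB1 : B1ᵀ * B1 = 1) (hB2 : B2ᵀ * B2 = 1)
    (hB1A1 : B1ᵀ * A1 = 0) (hB2A2 : B2ᵀ * A2 = 0)
    (h0 : ℕ) (hh0 : 1 ≤ h0)
    (ε : ℝ) (m : ℕ) (hm : ε * n = m)
    (hεlb : ((h0 : ℝ) + 1) / n < ε) (hεub : ε < 1 - (r0 : ℝ) / n)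
    (a2 δ2 : ℝ) (ha2 : 0 < a2) (hδ2 : δ2 ∈ Set.Icc (0:ℝ) 1)
    (hA2min : ∀ v : Fin k2 → ℝ,
      a2 * (p : ℝ) ^ ((1 - δ2) / 2) * vnorm v ≤ vnorm (A2.mulVec v))
    (d τ : ℝ) (hd : 0 < d) (hτ : 0 < τ)
    (hBA : a2 ^ 2 * d ^ 2 * τ * (p : ℝ) ^ (1 - δ2) ≤ spec (B1ᵀ * A2) ^ 2)
    (h2s : ℕ) (hh2s : h2s ∈ Finset.Icc 1 h0) (u0 : ℝ) (hu0 : 0 < u0)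
    (hΓmin : ∀ v : Fin k2 → ℝ,
      u0 * vnorm v ≤ vnorm
        ((((m : ℝ) - h2s)⁻¹ •
          ∑ t ∈ Finset.Icc (r0 + 1) (r0 + (m - h2s)),
            outerE μ (x2 t) (x2 (t + h2s))).mulVec v)) :
    a2 ^ 4 * d ^ 2 * τ * u0 ^ 2 *
        (ε ^ 2 * (p : ℝ) ^ (2 - 2 * δ2) - 2 * h2s * (p : ℝ) ^ (2 - 2 * δ2) / n) ≤
      spec (B1ᵀ * (∑ h ∈ Finset.Icc 1 h0,
          SigY1 μ y n h ⌊((r0 : ℝ) / n + ε) * n⌋₊ *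
            (SigY1 μ y n h ⌊((r0 : ℝ) / n + ε) * n⌋₊)ᵀ) * B1) +
      spec (B2ᵀ * (∑ h ∈ Finset.Icc 1 h0,
          SigY2 μ y n h ⌊((r0 : ℝ) / n + ε) * n⌋₊ *
            (SigY2 μ y n h ⌊((r0 : ℝ) / n + ε) * n⌋₊)ᵀ) * B2) :=
  stmt18_general μ hp hn A1 A2 x1 x2 e y hL2x1 hL2x2 hL2e hmodel1 hmodel2 hee hx1e hx2e B1 B2 hB1A1
    h0 ε m hm hεlb hεub a2 δ2 ha2 hA2min d τ hτ hBA h2s hh2s u0 hu0 hΓmin
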